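/- Symmetrization lemma: Let q ∈ [1,∞), E a real Banach space, and η_1,...,η_M be E-valued random variables in L^q with E[η_j] = 0 for all j. Let r_1,...,r_M be a Rademacher family such that η_1,...,η_M, r_1,...,r_M are all independent. Then ||Σ_{j=1}^M η_j||_{L^q(Ω;E)} ≤ 2 ||Σ_{j=1}^M r_j η_j||_{L^q(Ω;E)}. -/

import Mathlib

open MeasureTheory ProbabilityTheory

/-- A Rademacher family: independent random variables taking the values `1` and `-1`,
each with probability `1/2`. -/
def IsRademacherFamily {Ω : Type*} [MeasurableSpace Ω] (P : Measure Ω)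
    {ι : Type*} (r : ι → Ω → ℝ) : Prop :=
  (∀ j, Measurable (r j)) ∧
  iIndepFun r P ∧
  ∀ j, P {ω | r j ω = 1} = 1 / 2 ∧ P {ω | r j ω = -1} = 1 / 2

universe u

/-- Codomain family for the joint family `η₁, …, η_M, r₁, …, r_M`:
the first `M` variables are `E`-valued, the last `M` ones are real-valued. -/
def pairType (E : Type u) (M : ℕ) : Fin M ⊕ Fin M → Type u :=
  fun i => Sum.elim (fun _ => E) (fun _ => ULift ℝ) i

def pairMS {E : Type*} [MeasurableSpace E] (M : ℕ) :
    (i : Fin M ⊕ Fin M) → MeasurableSpace (pairType E M i)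
  | .inl _ => inferInstanceAs (MeasurableSpace E)
  | .inr _ => inferInstanceAs (MeasurableSpace (ULift ℝ))

def pairFun {Ω E : Type*} (M : ℕ) (η : Fin M → Ω → E) (r : Fin M → Ω → ℝ) :
    (i : Fin M ⊕ Fin M) → Ω → pairType E M i
  | .inl j => η j
  | .inr j => fun ω => ULift.up (r j ω)

open scoped ENNReal NNReal

/-!
Fix a sign vector `c`, let `A = {j | c j = 1}`, `X = ∑_{j ∈ A} ηⱼ` and `Y = ∑_{j ∉ A} ηⱼ`, so that
`∑ cⱼ ηⱼ = X - Y`. As `Y` is centred, `‖x‖ = ‖E (x - Y)‖ ≤ ‖x - Y‖_q` for every fixed `x`, and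
integrating over `X`, which is independent of `Y`, gives `‖X‖_q ≤ ‖X - Y‖_q`; symmetrically
`‖Y‖_q ≤ ‖X - Y‖_q`, hence `‖∑ ηⱼ‖_q ≤ 2 ‖∑ cⱼ ηⱼ‖_q`. As `r` is independent of `η` and a.s.
`{±1}`-valued, `E ‖∑ rⱼ ηⱼ‖^q` is an average of the `E ‖∑ cⱼ ηⱼ‖^q`, which gives the claim.

The sums are only measurable when `E` is second countable; in general one replaces the `ηⱼ` by
strongly measurable versions, which take values in a closed separable subspace.
-/

section Independence

variable {Ω : Type*} [MeasurableSpace Ω] {μ : Measure Ω}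

lemma ProbabilityTheory.iIndepFun.indepFun_finsetSum_of_disjoint {ι β : Type*}
    [AddCommMonoid β] [MeasurableSpace β] [MeasurableAdd₂ β] {f : ι → Ω → β}
    (h : iIndepFun f μ) (hf : ∀ i, Measurable (f i)) {S T : Finset ι} (hST : Disjoint S T) :
    IndepFun (fun ω => ∑ i ∈ S, f i ω) (fun ω => ∑ i ∈ T, f i ω) μ := by
  have := (h.indepFun_finset S T hST hf).comp (φ := fun x : S → β => ∑ i, x i)
    (ψ := fun x : T → β => ∑ i, x i) (by fun_prop) (by fun_prop)
  convert this using 1 <;> exact funext fun ω => (Finset.sum_coe_sort _ (f · ω)).symm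

variable {α β : Type*} [MeasurableSpace α] [MeasurableSpace β] {X : Ω → α} {Y : Ω → β}

lemma ProbabilityTheory.IndepFun.lintegral_comp_eq_lintegral_lintegral [IsFiniteMeasure μ]
    (hXY : IndepFun X Y μ) (hX : AEMeasurable X μ) (hY : AEMeasurable Y μ)
    {f : α × β → ℝ≥0∞} (hf : Measurable f) :
    ∫⁻ ω, f (X ω, Y ω) ∂μ = ∫⁻ ω, ∫⁻ ω', f (X ω, Y ω') ∂μ ∂μ := by
  calc ∫⁻ ω, f (X ω, Y ω) ∂μ = ∫⁻ z, f z ∂(μ.map fun ω => (X ω, Y ω)) :=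
        (lintegral_map' hf.aemeasurable (hX.prodMk hY)).symm
    _ = ∫⁻ x, ∫⁻ y, f (x, y) ∂(μ.map Y) ∂(μ.map X) := by
        rw [hXY.map_prod_eq_prod_map_map hX hY, lintegral_prod _ hf.aemeasurable]
    _ = ∫⁻ ω, ∫⁻ ω', f (X ω, Y ω') ∂μ ∂μ := by
        rw [lintegral_map' (hf.lintegral_prod_right').aemeasurable hX]
        refine lintegral_congr fun ω => ?_
        exact lintegral_map' (hf.comp measurable_prodMk_left).aemeasurable hY

variable [IsProbabilityMeasure μ] {E : Type*} [NormedAddCommGroup E] [MeasurableSpace E]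
  [BorelSpace E]

lemma ProbabilityTheory.IndepFun.le_eLpNorm_comp_of_ae_le (hXY : IndepFun X Y μ)
    (hX : AEMeasurable X μ) (hY : AEMeasurable Y μ) {F : α × β → E} (hF : Measurable F)
    {p : ℝ≥0} (hp : p ≠ 0) {a : ℝ≥0∞}
    (ha : ∀ᵐ ω ∂μ, a ≤ eLpNorm (fun ω' => F (X ω, Y ω')) p μ) :
    a ≤ eLpNorm (fun ω => F (X ω, Y ω)) p μ := by
  have hp0 : (0 : ℝ) < p := by positivity
  rw [← ENNReal.rpow_le_rpow_iff hp0, eLpNorm_nnreal_pow_eq_lintegral hp,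
    hXY.lintegral_comp_eq_lintegral_lintegral hX hY
      (f := fun z => ‖F z‖ₑ ^ (p : ℝ)) (by fun_prop)]
  calc a ^ (p : ℝ) = ∫⁻ _, a ^ (p : ℝ) ∂μ := by simp
    _ ≤ ∫⁻ ω, ∫⁻ ω', ‖F (X ω, Y ω')‖ₑ ^ (p : ℝ) ∂μ ∂μ := by
        refine lintegral_mono_ae (ha.mono fun ω hω => ?_)
        rw [← eLpNorm_nnreal_pow_eq_lintegral hp]
        gcongr

end Independence

section Centering

variable {Ω : Type*} [MeasurableSpace Ω] {μ : Measure Ω} [IsProbabilityMeasure μ]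
  {E : Type*} [NormedAddCommGroup E] [NormedSpace ℝ E] [CompleteSpace E]

lemma enorm_le_eLpNorm_sub_of_integral_eq_zero {Y : Ω → E} (hY : Integrable Y μ)
    (hY0 : ∫ ω, Y ω ∂μ = 0) {p : ℝ≥0∞} (hp : 1 ≤ p) (x : E) :
    ‖x‖ₑ ≤ eLpNorm (fun ω => x - Y ω) p μ :=
  calc ‖x‖ₑ = ‖∫ ω, (x - Y ω) ∂μ‖ₑ := by
        rw [integral_sub (integrable_const x) hY, hY0, sub_zero, integral_const]; simp
    _ ≤ ∫⁻ ω, ‖x - Y ω‖ₑ ∂μ := enorm_integral_le_lintegral_enorm _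
    _ = eLpNorm (fun ω => x - Y ω) 1 μ := eLpNorm_one_eq_lintegral_enorm.symm
    _ ≤ eLpNorm (fun ω => x - Y ω) p μ :=
        eLpNorm_le_eLpNorm_of_exponent_le hp (aestronglyMeasurable_const.sub hY.1)

variable [MeasurableSpace E] [BorelSpace E] [SecondCountableTopology E]

lemma eLpNorm_le_eLpNorm_sub_of_indepFun {X Y : Ω → E} (hXY : IndepFun X Y μ)
    (hX : AEMeasurable X μ) (hY : Integrable Y μ) (hY0 : ∫ ω, Y ω ∂μ = 0)
    {p : ℝ≥0} (hp : 1 ≤ p) : eLpNorm X p μ ≤ eLpNorm (X - Y) p μ := by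
  have hp0 : p ≠ 0 := (one_pos.trans_le hp).ne'
  rw [← ENNReal.rpow_le_rpow_iff (by positivity : (0 : ℝ) < p),
    eLpNorm_nnreal_pow_eq_lintegral hp0, eLpNorm_nnreal_pow_eq_lintegral hp0]
  calc ∫⁻ ω, ‖X ω‖ₑ ^ (p : ℝ) ∂μ ≤ ∫⁻ ω, ∫⁻ ω', ‖X ω - Y ω'‖ₑ ^ (p : ℝ) ∂μ ∂μ := by
        refine lintegral_mono fun ω => ?_
        rw [← eLpNorm_nnreal_pow_eq_lintegral hp0]
        gcongr
        exact enorm_le_eLpNorm_sub_of_integral_eq_zero hY hY0 (by exact_mod_cast hp) _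
    _ = ∫⁻ ω, ‖(X - Y) ω‖ₑ ^ (p : ℝ) ∂μ :=
        (hXY.lintegral_comp_eq_lintegral_lintegral hX hY.aemeasurable
          (f := fun z => ‖z.1 - z.2‖ₑ ^ (p : ℝ)) (by fun_prop)).symm

end Centering

section Symmetrization

variable {Ω : Type*} [MeasurableSpace Ω] {μ : Measure Ω} [IsProbabilityMeasure μ]
  {E : Type*} [NormedAddCommGroup E] [NormedSpace ℝ E] [CompleteSpace E]
  [MeasurableSpace E] [BorelSpace E] [SecondCountableTopology E]
  {ι : Type*} [Fintype ι] {η : ι → Ω → E}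

lemma eLpNorm_sum_le_two_mul_eLpNorm_sum_smul_of_sign (hη : ∀ i, Measurable (η i))
    (hint : ∀ i, Integrable (η i) μ) (hmean : ∀ i, ∫ ω, η i ω ∂μ = 0) (hindep : iIndepFun η μ)
    {c : ι → ℝ} (hc : ∀ i, c i = 1 ∨ c i = -1) {p : ℝ≥0} (hp : 1 ≤ p) :
    eLpNorm (fun ω => ∑ i, η i ω) p μ ≤ 2 * eLpNorm (fun ω => ∑ i, c i • η i ω) p μ := by
  classical
  set A := Finset.univ.filter (c · = 1)
  set X := fun ω => ∑ i ∈ A, η i ω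
  set Y := fun ω => ∑ i ∈ Aᶜ, η i ω
  have hXY : IndepFun X Y μ := hindep.indepFun_finsetSum_of_disjoint hη disjoint_compl_right
  have hX : Measurable X := Finset.measurable_sum _ fun i _ => hη i
  have hY : Measurable Y := Finset.measurable_sum _ fun i _ => hη i
  have hXint : Integrable X μ := integrable_finsetSum _ fun i _ => hint i
  have hYint : Integrable Y μ := integrable_finsetSum _ fun i _ => hint i
  have hX0 : ∫ ω, X ω ∂μ = 0 := by simp [X, integral_finsetSum _ fun i _ => hint i, hmean]
  have hY0 : ∫ ω, Y ω ∂μ = 0 := by simp [Y, integral_finsetSum _ fun i _ => hint i, hmean]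
  have hsum : (fun ω => ∑ i, η i ω) = X + Y :=
    funext fun ω => (Finset.sum_add_sum_compl A _).symm
  have hsmul : (fun ω => ∑ i, c i • η i ω) = X - Y := by
    funext ω
    rw [← Finset.sum_add_sum_compl A, Pi.sub_apply, sub_eq_add_neg, ← Finset.sum_neg_distrib]
    congr 1 <;> refine Finset.sum_congr rfl fun i hi => ?_
    · simp_all [A]
    · rcases hc i with h | h <;> simp_all [A]
  calc eLpNorm (fun ω => ∑ i, η i ω) p μ ≤ eLpNorm X p μ + eLpNorm Y p μ := by
        rw [hsum]
        exact eLpNorm_add_le hX.aestronglyMeasurable hY.aestronglyMeasurable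
          (by exact_mod_cast hp)
    _ ≤ eLpNorm (X - Y) p μ + eLpNorm (Y - X) p μ :=
        add_le_add (eLpNorm_le_eLpNorm_sub_of_indepFun hXY hX.aemeasurable hYint hY0 hp)
          (eLpNorm_le_eLpNorm_sub_of_indepFun hXY.symm hY.aemeasurable hXint hX0 hp)
    _ = 2 * eLpNorm (fun ω => ∑ i, c i • η i ω) p μ := by
        rw [← neg_sub X Y, eLpNorm_neg, hsmul, two_mul]

theorem eLpNorm_sum_le_two_mul_eLpNorm_sum_smul (hη : ∀ i, Measurable (η i))
    (hint : ∀ i, Integrable (η i) μ) (hmean : ∀ i, ∫ ω, η i ω ∂μ = 0) (hindep : iIndepFun η μ)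
    {r : ι → Ω → ℝ} (hr : ∀ i, Measurable (r i))
    (hsign : ∀ᵐ ω ∂μ, ∀ i, r i ω = 1 ∨ r i ω = -1)
    (hrη : IndepFun (fun ω i => r i ω) (fun ω i => η i ω) μ) {p : ℝ≥0} (hp : 1 ≤ p) :
    eLpNorm (fun ω => ∑ i, η i ω) p μ ≤ 2 * eLpNorm (fun ω => ∑ i, r i ω • η i ω) p μ := by
  rw [mul_comm, ← ENNReal.div_le_iff two_ne_zero ENNReal.ofNat_ne_top]
  refine hrη.le_eLpNorm_comp_of_ae_le (measurable_pi_lambda _ hr).aemeasurable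
    (measurable_pi_lambda _ hη).aemeasurable (F := fun z => ∑ i, z.1 i • z.2 i) (by fun_prop)
    (one_pos.trans_le hp).ne' (hsign.mono fun ω hω => ?_)
  rw [ENNReal.div_le_iff two_ne_zero ENNReal.ofNat_ne_top, mul_comm]
  exact eLpNorm_sum_le_two_mul_eLpNorm_sum_smul_of_sign hη hint hmean hindep hω hp

end Symmetrization

lemma exists_isClosed_separableSpace_submodule {Ω E ι : Type*} [MeasurableSpace Ω]
    [NormedAddCommGroup E] [NormedSpace ℝ E] [Countable ι] {f : ι → Ω → E}
    (hf : ∀ i, StronglyMeasurable (f i)) :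
    ∃ F : Submodule ℝ E, IsClosed (F : Set E) ∧ TopologicalSpace.SeparableSpace F ∧
      ∀ i ω, f i ω ∈ F := by
  have hsep : TopologicalSpace.IsSeparable (⋃ i, Set.range (f i)) :=
    .iUnion fun i => (hf i).isSeparable_range
  refine ⟨(Submodule.span ℝ (⋃ i, Set.range (f i))).topologicalClosure,
    Submodule.isClosed_topologicalClosure _, ?_, fun i ω => ?_⟩
  · have : TopologicalSpace.IsSeparable
        ((Submodule.span ℝ (⋃ i, Set.range (f i))).topologicalClosure : Set E) := by
      rw [Submodule.topologicalClosure_coe]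
      exact hsep.span.closure
    exact this.separableSpace
  · exact Submodule.le_topologicalClosure _
      (Submodule.subset_span (Set.mem_iUnion.2 ⟨i, Set.mem_range_self ω⟩))

section PairFun

variable {Ω : Type*} [MeasurableSpace Ω] {P : Measure Ω} {E : Type*} [MeasurableSpace E]
  {M : ℕ} {η : Fin M → Ω → E} {r : Fin M → Ω → ℝ}

lemma iIndepFun_of_iIndepFun_pairFun (h : iIndepFun (m := pairMS M) (pairFun M η r) P) :
    iIndepFun η P :=
  h.precomp (g := Sum.inl) Sum.inl_injective

lemma indepFun_of_iIndepFun_pairFun (h : iIndepFun (m := pairMS M) (pairFun M η r) P)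
    (hη : ∀ j, Measurable (η j)) (hr : ∀ j, Measurable (r j)) :
    IndepFun (fun ω j => r j ω) (fun ω j => η j ω) P := by
  have hdisj : Disjoint (Finset.univ.map .inr) (Finset.univ.map (.inl : Fin M ↪ Fin M ⊕ Fin M)) :=
    by simp [Finset.disjoint_left]
  let _ := pairMS (E := E) M
  have hmeas : ∀ i, Measurable (pairFun M η r i) := by
    rintro (j | j)
    exacts [hη j, measurable_up.comp (hr j)]
  exact (h.indepFun_finset _ _ hdisj hmeas).comp
    (φ := fun x j => (x ⟨.inr j, by simp⟩ : ULift ℝ).down)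
    (ψ := fun x j => (x ⟨.inl j, by simp⟩ : E))
    (measurable_pi_lambda _ fun j => measurable_down.comp (measurable_pi_apply _))
    (measurable_pi_lambda _ fun j => measurable_pi_apply _)

lemma iIndepFun_pairFun_codRestrict {s : Set E} (hs : ∀ j ω, η j ω ∈ s)
    (h : iIndepFun (m := pairMS M) (pairFun M η r) P) :
    iIndepFun (m := pairMS M) (pairFun M (fun j => s.codRestrict (η j) (hs j)) r) P := by
  have hcomap : ∀ i, (pairMS M i).comap (pairFun M (fun j => s.codRestrict (η j) (hs j)) r i)
      = (pairMS M i).comap (pairFun M η r i) := by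
    rintro (j | j)
    exacts [MeasurableSpace.comap_comp, rfl]
  rw [iIndepFun_iff_iIndep] at h ⊢
  simpa only [hcomap] using h

end PairFun

section Reduction

variable {Ω : Type*} [MeasurableSpace Ω] {P : Measure Ω} [IsProbabilityMeasure P]
  {E : Type*} [NormedAddCommGroup E] [NormedSpace ℝ E] [CompleteSpace E]
  [MeasurableSpace E] [BorelSpace E] {M : ℕ} {η : Fin M → Ω → E} {r : Fin M → Ω → ℝ}

lemma eLpNorm_sum_le_two_mul_eLpNorm_sum_smul_of_pairFun (hη : ∀ j, StronglyMeasurable (η j))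
    (hint : ∀ j, Integrable (η j) P) (hmean : ∀ j, ∫ ω, η j ω ∂P = 0)
    (hr : ∀ j, Measurable (r j)) (hsign : ∀ᵐ ω ∂P, ∀ j, r j ω = 1 ∨ r j ω = -1)
    (hindep : iIndepFun (m := pairMS M) (pairFun M η r) P) {p : ℝ≥0} (hp : 1 ≤ p) :
    eLpNorm (fun ω => ∑ j, η j ω) p P ≤ 2 * eLpNorm (fun ω => ∑ j, r j ω • η j ω) p P := by
  obtain ⟨F, hF_closed, hF_sep, hηF⟩ := exists_isClosed_separableSpace_submodule hη
  have : CompleteSpace F := hF_closed.completeSpace_coe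
  set ηF : Fin M → Ω → F := fun j => (F : Set E).codRestrict (η j) (hηF j)
  have hηF_meas : ∀ j, Measurable (ηF j) := fun j => (hη j).measurable.codRestrict _
  have hηF_int : ∀ j, Integrable (ηF j) P := fun j =>
    (hint j).congr' (hηF_meas j).aestronglyMeasurable (.of_forall fun ω => rfl)
  have hηF_mean : ∀ j, ∫ ω, ηF j ω ∂P = 0 := fun j => by
    refine Subtype.ext ?_
    calc ((∫ ω, ηF j ω ∂P : F) : E) = ∫ ω, η j ω ∂P :=
          (F.subtypeL.integral_comp_comm (hηF_int j)).symm
      _ = 0 := hmean j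
  have hindepF := iIndepFun_pairFun_codRestrict hηF hindep
  have key := eLpNorm_sum_le_two_mul_eLpNorm_sum_smul hηF_meas hηF_int hηF_mean
    (iIndepFun_of_iIndepFun_pairFun hindepF) hr hsign
    (indepFun_of_iIndepFun_pairFun hindepF hηF_meas hr) hp
  convert key using 2 <;> refine eLpNorm_congr_norm_ae (.of_forall fun ω => ?_) <;> simp [ηF]

end Reduction

lemma IsRademacherFamily.ae_eq_one_or_eq_neg_one {Ω ι : Type*} [MeasurableSpace Ω]
    {P : Measure Ω} [IsProbabilityMeasure P] [Countable ι] {r : ι → Ω → ℝ}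
    (hr : IsRademacherFamily P r) : ∀ᵐ ω ∂P, ∀ i, r i ω = 1 ∨ r i ω = -1 := by
  refine ae_all_iff.2 fun i => ?_
  have hmeas : MeasurableSet {ω | r i ω = 1 ∨ r i ω = -1} :=
    (hr.1 i (measurableSet_singleton 1)).union (hr.1 i (measurableSet_singleton (-1)))
  have hdisj : Disjoint {ω | r i ω = 1} {ω | r i ω = -1} :=
    Set.disjoint_left.2 fun ω (h1 : r i ω = 1) (h2 : r i ω = -1) => by norm_num [h1] at h2
  refine (ae_iff_measure_eq hmeas.nullMeasurableSet).2 ?_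
  rw [Set.ofPred_or, measure_union hdisj (hr.1 i (measurableSet_singleton (-1))), (hr.2.2 i).1,
    (hr.2.2 i).2, ENNReal.add_halves, measure_univ]

/-- Symmetrization lemma: for centered `E`-valued random variables `η₁, …, η_M` in `L^q`
and a Rademacher family `r₁, …, r_M` such that all of `η₁, …, η_M, r₁, …, r_M` are
independent, `‖∑ ηⱼ‖_{L^q(Ω;E)} ≤ 2 ‖∑ rⱼ ηⱼ‖_{L^q(Ω;E)}`. -/
theorem symmetrization
    {Ω : Type*} [MeasurableSpace Ω] (P : Measure Ω) [IsProbabilityMeasure P]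
    {E : Type*} [NormedAddCommGroup E] [NormedSpace ℝ E] [CompleteSpace E]
    [MeasurableSpace E] [BorelSpace E]
    (q : ℝ) (hq : 1 ≤ q) (M : ℕ)
    (η : Fin M → Ω → E) (r : Fin M → Ω → ℝ)
    (hmem : ∀ j, MemLp (η j) (ENNReal.ofReal q) P)
    (hmean : ∀ j, ∫ ω, η j ω ∂P = 0)
    (hrad : IsRademacherFamily P r)
    (hindep : iIndepFun (m := pairMS M) (pairFun M η r) P) :
    eLpNorm (fun ω => ∑ j, η j ω) (ENNReal.ofReal q) P
      ≤ 2 * eLpNorm (fun ω => ∑ j, r j ω • η j ω) (ENNReal.ofReal q) P := by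
  set η₀ : Fin M → Ω → E := fun j => (hmem j).1.mk (η j)
  have hae : ∀ j, η j =ᵐ[P] η₀ j := fun j => (hmem j).1.ae_eq_mk
  have hae_all : ∀ᵐ ω ∂P, ∀ j, η j ω = η₀ j ω := ae_all_iff.2 hae
  have key := eLpNorm_sum_le_two_mul_eLpNorm_sum_smul_of_pairFun
    (fun j => (hmem j).1.stronglyMeasurable_mk)
    (fun j => ((hmem j).integrable (ENNReal.one_le_ofReal.2 hq)).congr (hae j))
    (fun j => (integral_congr_ae (hae j)).symm.trans (hmean j)) hrad.1
    hrad.ae_eq_one_or_eq_neg_one (hindep.congr (by rintro (j | j); exacts [hae j, .rfl]))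
    (p := q.toNNReal) (Real.one_le_toNNReal.2 hq)
  have hsum : (fun ω => ∑ j, η j ω) =ᵐ[P] fun ω => ∑ j, η₀ j ω :=
    hae_all.mono fun ω hω => by simp [hω]
  have hsum_smul : (fun ω => ∑ j, r j ω • η j ω) =ᵐ[P] fun ω => ∑ j, r j ω • η₀ j ω :=
    hae_all.mono fun ω hω => by simp [hω]
  rw [eLpNorm_congr_ae hsum, eLpNorm_congr_ae hsum_smul]
  exact key
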